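/- arXiv:1506.05728 — 2 statements merged into one kernel-verified Lean document; each statement's English description precedes it below -/
import Mathlib

section
/- Define the relativization φ[n] of a CLTL formula φ at rank n recursively by: a[n]=a, (¬a)[n]=¬a, (Xφ)[n]=X(φ[n]), (φ₁⋈φ₂)[n]=φ₁[n]⋈φ₂[n] for ⋈∈{∨,∧,U,R}, and for LTL formulas φ₁,φ₂: (φ₁ U≤ φ₂)[0]=φ₁ U φ₂ and (φ₁ U≤ φ₂)[n+1]=(φ₁ ∨ X((φ₁ U≤ φ₂)[n])) U φ₂; in the general case (φ₁ U≤ φ₂)[n]=(φ₁[n] U≤ φ₂[n])[n]. Then for every infinite word u and natural number n, u satisfies the LTL formula φ[n] if and only if ⟦φ⟧(u) ≤ n. -/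
/-!
Reading `(φ₁ U≤ φ₂)[n+1] = (φ₁ ∨ X (φ₁ U≤ φ₂)[n]) U φ₂` backwards: at the first position where
`φ₁` fails, the formula restarts one step later with one failure less in its budget. So the
unfolding at rank `n` says "`φ₂` eventually holds, after at most `n` failures of `φ₁`", which is
exactly `(u, n) ⊨ φ₁ U≤ φ₂`; by structural induction `u ⊨ φ[n]` iff `(u, n) ⊨ φ`. Without `R>`,
satisfaction is monotone in `n`, so the ranks satisfying `φ` form an up-set of `ℕ` whose infimum
is at most `n` exactly when it contains `n`.
-/

open scoped Classical

/-- Cost LTL formulas (in negative normal form), including both the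
`U≤` operator (`uleq`) of CLTL≤ and the dual `R>` operator (`rgt`) of CLTL>. -/
inductive CLTL (AP : Type) : Type where
  | pos (a : AP)
  | neg (a : AP)
  | disj (φ ψ : CLTL AP)
  | conj (φ ψ : CLTL AP)
  | untl (φ ψ : CLTL AP)
  | rels (φ ψ : CLTL AP)
  | next (φ : CLTL AP)
  | uleq (φ ψ : CLTL AP)
  | rgt (φ ψ : CLTL AP)

/-- The suffix `u^i` of an infinite word. -/
def shift {AP : Type} (u : ℕ → Set AP) (i : ℕ) : ℕ → Set AP := fun k => u (i + k)

/-- The quantitative satisfaction relation `(u,n) ⊨ φ`. -/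
def CLTL.sat {AP : Type} : CLTL AP → (ℕ → Set AP) → ℕ → Prop
  | .pos a, u, _ => a ∈ u 0
  | .neg a, u, _ => a ∉ u 0
  | .disj φ ψ, u, n => φ.sat u n ∨ ψ.sat u n
  | .conj φ ψ, u, n => φ.sat u n ∧ ψ.sat u n
  | .untl φ ψ, u, n => ∃ i, ψ.sat (shift u i) n ∧ ∀ j < i, φ.sat (shift u j) n
  | .rels φ ψ, u, n => ∀ i, ψ.sat (shift u i) n ∨ ∃ j < i, φ.sat (shift u j) n
  | .next φ, u, n => φ.sat (shift u 1) n
  | .uleq φ ψ, u, n => ∃ i, ψ.sat (shift u i) n ∧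
      ((Finset.range i).filter (fun j => ¬ φ.sat (shift u j) n)).card ≤ n
  | .rgt φ ψ, u, n => ∀ i, ψ.sat (shift u i) n ∨
      n < ((Finset.range i).filter (fun j => φ.sat (shift u j) n)).card

/-- `φ` contains no occurrence of `R>`, i.e. `φ` is a CLTL≤ formula. -/
def CLTL.noRgt {AP : Type} : CLTL AP → Prop
  | .pos _ => True
  | .neg _ => True
  | .disj φ ψ => φ.noRgt ∧ ψ.noRgt
  | .conj φ ψ => φ.noRgt ∧ ψ.noRgt
  | .untl φ ψ => φ.noRgt ∧ ψ.noRgt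
  | .rels φ ψ => φ.noRgt ∧ ψ.noRgt
  | .next φ => φ.noRgt
  | .uleq φ ψ => φ.noRgt ∧ ψ.noRgt
  | .rgt _ _ => False

/-- `φ` contains no occurrence of `U≤`, i.e. `φ` is a CLTL> formula. -/
def CLTL.noUleq {AP : Type} : CLTL AP → Prop
  | .pos _ => True
  | .neg _ => True
  | .disj φ ψ => φ.noUleq ∧ ψ.noUleq
  | .conj φ ψ => φ.noUleq ∧ ψ.noUleq
  | .untl φ ψ => φ.noUleq ∧ ψ.noUleq
  | .rels φ ψ => φ.noUleq ∧ ψ.noUleq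
  | .next φ => φ.noUleq
  | .uleq _ _ => False
  | .rgt φ ψ => φ.noUleq ∧ ψ.noUleq

/-- `φ` is a pure LTL formula (in NNF): no `U≤` and no `R>`. -/
def CLTL.isLTL {AP : Type} (φ : CLTL AP) : Prop := φ.noRgt ∧ φ.noUleq

/-- `⟦φ⟧_inf(u) = inf { n | (u,n) ⊨ φ }`, with `inf ∅ = ∞`. -/
noncomputable def CLTL.semInf {AP : Type} (φ : CLTL AP) (u : ℕ → Set AP) : ℕ∞ :=
  sInf {m : ℕ∞ | ∃ n : ℕ, m = n ∧ φ.sat u n}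

/-- `⟦φ⟧_sup(u) = sup { n | (u,n) ⊨ φ }`, with `sup ∅ = 0`. -/
noncomputable def CLTL.semSup {AP : Type} (φ : CLTL AP) (u : ℕ → Set AP) : ℕ∞ :=
  sSup {m : ℕ∞ | ∃ n : ℕ, m = n ∧ φ.sat u n}

/-- Satisfaction of an LTL formula (the parameter `n` is irrelevant for LTL). -/
def CLTL.ltlSat {AP : Type} (φ : CLTL AP) (u : ℕ → Set AP) : Prop := φ.sat u 0

/-- Syntactic negation: dualize every operator and negate the literals. -/
def CLTL.negate {AP : Type} : CLTL AP → CLTL AP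
  | .pos a => .neg a
  | .neg a => .pos a
  | .disj φ ψ => .conj φ.negate ψ.negate
  | .conj φ ψ => .disj φ.negate ψ.negate
  | .untl φ ψ => .rels φ.negate ψ.negate
  | .rels φ ψ => .untl φ.negate ψ.negate
  | .next φ => .next φ.negate
  | .uleq φ ψ => .rgt φ.negate ψ.negate
  | .rgt φ ψ => .uleq φ.negate ψ.negate

/-- Unfolding of `φ₁ U≤ φ₂` at rank `n`:
`(φ₁ U≤ φ₂)[0] = φ₁ U φ₂`, `(φ₁ U≤ φ₂)[n+1] = (φ₁ ∨ X((φ₁ U≤ φ₂)[n])) U φ₂`. -/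
def CLTL.unfoldU {AP : Type} (φ ψ : CLTL AP) : ℕ → CLTL AP
  | 0 => .untl φ ψ
  | n + 1 => .untl (.disj φ (.next (CLTL.unfoldU φ ψ n))) ψ

/-- Relativization `φ[n]` of a CLTL≤ formula, producing an LTL formula. -/
def CLTL.rel {AP : Type} (n : ℕ) : CLTL AP → CLTL AP
  | .pos a => .pos a
  | .neg a => .neg a
  | .disj φ ψ => .disj (φ.rel n) (ψ.rel n)
  | .conj φ ψ => .conj (φ.rel n) (ψ.rel n)
  | .untl φ ψ => .untl (φ.rel n) (ψ.rel n)
  | .rels φ ψ => .rels (φ.rel n) (ψ.rel n)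
  | .next φ => .next (φ.rel n)
  | .uleq φ ψ => CLTL.unfoldU (φ.rel n) (ψ.rel n) n
  | .rgt φ ψ => .rgt (φ.rel n) (ψ.rel n)

/-- Relativization `φ[n] = ¬((¬φ)[n])` of a CLTL> formula. -/
def CLTL.relGt {AP : Type} (n : ℕ) (φ : CLTL AP) : CLTL AP :=
  (CLTL.rel n φ.negate).negate

theorem shift_shift {AP : Type} (u : ℕ → Set AP) (a b : ℕ) :
    shift (shift u a) b = shift u (a + b) := by
  funext k
  simp [shift, Nat.add_assoc]

def BoundedUntil (P Q : ℕ → Prop) (n : ℕ) : Prop :=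
  ∃ i, Q i ∧ Nat.count (fun j => ¬ P j) i ≤ n

namespace BoundedUntil

variable {P Q P' Q' : ℕ → Prop} {n n' : ℕ}

theorem mono (hP : ∀ j, P j → P' j) (hQ : ∀ j, Q j → Q' j) (hn : n ≤ n')
    (h : BoundedUntil P Q n) : BoundedUntil P' Q' n' := by
  obtain ⟨i, hi, hcount⟩ := h
  exact ⟨i, hQ i hi, (Nat.count_mono_left fun j _ hj hP'j => hj (hP j hP'j)).trans
    (hcount.trans hn)⟩

theorem zero_iff : BoundedUntil P Q 0 ↔ ∃ i, Q i ∧ ∀ j < i, P j := by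
  simp only [BoundedUntil, Nat.le_zero, Nat.count_iff_forall_not, not_not]

theorem succ_iff :
    BoundedUntil P Q (n + 1) ↔ ∃ i, Q i ∧ ∀ j < i,
      P j ∨ BoundedUntil (fun k => P (j + 1 + k)) (fun k => Q (j + 1 + k)) n := by
  constructor
  · rintro ⟨i, hQ, hcount⟩
    refine ⟨i, hQ, fun j hji => or_iff_not_imp_left.2 fun hPj => ?_⟩
    obtain ⟨r, rfl⟩ : ∃ r, i = j + 1 + r := ⟨i - (j + 1), by omega⟩
    refine ⟨r, hQ, ?_⟩
    rw [Nat.count_add, Nat.count_succ_eq_succ_count_iff.2 hPj] at hcount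
    beta_reduce
    omega
  · rintro ⟨i, hQ, hstep⟩
    by_cases hall : ∀ j < i, P j
    · exact zero_iff.2 ⟨i, hQ, hall⟩ |>.mono (fun _ => id) (fun _ => id) (Nat.zero_le _)
    push Not at hall
    -- the first failure of `P` is where the budget is spent
    obtain ⟨j, ⟨hji, hPj⟩, hfirst⟩ : ∃ j, (j < i ∧ ¬ P j) ∧ ∀ k < j, P k :=
      ⟨Nat.find hall, Nat.find_spec hall,
        fun k hk => by_contra fun hPk => Nat.find_min hall hk ⟨hk.trans (Nat.find_spec hall).1, hPk⟩⟩
    obtain ⟨i', hQ', hcount'⟩ := (hstep j hji).resolve_left hPj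
    refine ⟨j + 1 + i', hQ', ?_⟩
    beta_reduce at hcount'
    rw [Nat.count_add, Nat.count_succ_eq_succ_count_iff.2 hPj,
      Nat.count_iff_forall_not.2 fun k hk => not_not.2 (hfirst k hk)]
    omega

end BoundedUntil

namespace CLTL

variable {AP : Type}

theorem sat_unfoldU (φ ψ : CLTL AP) (n : ℕ) (u : ℕ → Set AP) (m : ℕ) :
    (unfoldU φ ψ n).sat u m ↔
      BoundedUntil (fun j => φ.sat (shift u j) m) (fun j => ψ.sat (shift u j) m) n := by
  induction n generalizing u with
  | zero => simp only [unfoldU, sat, BoundedUntil.zero_iff]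
  | succ n ih => simp only [unfoldU, sat, ih, shift_shift, BoundedUntil.succ_iff]

theorem sat_uleq (φ ψ : CLTL AP) (u : ℕ → Set AP) (n : ℕ) :
    (uleq φ ψ).sat u n ↔
      BoundedUntil (fun j => φ.sat (shift u j) n) (fun j => ψ.sat (shift u j) n) n := by
  simp only [sat, BoundedUntil, Nat.count_eq_card_filter_range]

theorem sat_monotone {φ : CLTL AP} (hφ : φ.noRgt) (u : ℕ → Set AP) : Monotone (φ.sat u) := by
  intro m n hmn
  induction φ generalizing u with
  | pos | neg => exact id
  | disj _ _ ih₁ ih₂ => exact Or.imp (ih₁ hφ.1 u) (ih₂ hφ.2 u)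
  | conj _ _ ih₁ ih₂ => exact And.imp (ih₁ hφ.1 u) (ih₂ hφ.2 u)
  | untl _ _ ih₁ ih₂ =>
    exact fun ⟨i, hi, hbefore⟩ => ⟨i, ih₂ hφ.2 _ hi, fun j hj => ih₁ hφ.1 _ (hbefore j hj)⟩
  | rels _ _ ih₁ ih₂ =>
    exact fun h i => (h i).imp (ih₂ hφ.2 _) fun ⟨j, hj, hs⟩ => ⟨j, hj, ih₁ hφ.1 _ hs⟩
  | next _ ih => exact ih hφ _
  | uleq _ _ ih₁ ih₂ =>
    simp only [sat_uleq]
    exact BoundedUntil.mono (fun _ => ih₁ hφ.1 _) (fun _ => ih₂ hφ.2 _) hmn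
  | rgt => exact hφ.elim

theorem sat_rel {φ : CLTL AP} (hφ : φ.noRgt) (u : ℕ → Set AP) (n m : ℕ) :
    (φ.rel n).sat u m ↔ φ.sat u n := by
  induction φ generalizing u with
  | pos | neg => rfl
  | disj _ _ ih₁ ih₂ | conj _ _ ih₁ ih₂ | untl _ _ ih₁ ih₂ | rels _ _ ih₁ ih₂ =>
    simp only [rel, sat, ih₁ hφ.1, ih₂ hφ.2]
  | next _ ih => simp only [rel, sat, ih hφ]
  | uleq _ _ ih₁ ih₂ => simp only [rel, sat_unfoldU, sat_uleq, ih₁ hφ.1, ih₂ hφ.2]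
  | rgt => exact hφ.elim

theorem semInf_le_iff {φ : CLTL AP} {u : ℕ → Set AP} (hmono : Monotone (φ.sat u)) (n : ℕ) :
    φ.semInf u ≤ n ↔ φ.sat u n := by
  rw [← ENat.lt_natCast_add_one_iff, semInf, sInf_lt_iff]
  constructor
  · rintro ⟨_, ⟨k, rfl, hk⟩, hlt⟩
    exact hmono (Nat.lt_succ_iff.1 (by exact_mod_cast hlt)) hk
  · exact fun hn => ⟨n, ⟨n, rfl, hn⟩, by exact_mod_cast n.lt_succ_self⟩

end CLTL

/-- `u ⊨ φ[n]` iff `⟦φ⟧(u) ≤ n`. -/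
theorem cltl_rel_correct {AP : Type} (φ : CLTL AP) (hφ : φ.noRgt)
    (u : ℕ → Set AP) (n : ℕ) :
    (φ.rel n).ltlSat u ↔ φ.semInf u ≤ (n : ℕ∞) := by
  rw [CLTL.ltlSat, CLTL.sat_rel hφ, CLTL.semInf_le_iff (CLTL.sat_monotone hφ u)]
end

section
/- For the formula φ₂ = G(F≤ ¬a), i.e., ⊥ R (⊥ U≤ ¬a), and any infinite word u in which ¬a occurs infinitely often, ⟦φ₂⟧(u) equals the supremum over all positions i of the length of the maximal block of consecutive a-positions starting at i; in particular ⟦φ₂⟧(u) is the supremum of the lengths of the blocks of consecutive a's in u. -/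
open scoped Classical

/-- for `φ₂ = G (F≤ ¬a) = ⊥ R (⊥ U≤ ¬a)` and a word in which `¬a`
occurs infinitely often, `⟦φ₂⟧(u)` is the supremum over positions `i` of the
number of consecutive `a`-positions starting at `i` (the maximal number of
consecutive `a`'s in `u`).  `⊥` is encoded as `a ∧ ¬a`. -/
theorem semInf_G_Fleq_max_block {AP : Type} (a : AP) (u : ℕ → Set AP)
    (hinf : ∀ i : ℕ, ∃ j : ℕ, i ≤ j ∧ a ∉ u j) :
    (CLTL.rels (CLTL.conj (CLTL.pos a) (CLTL.neg a))
        (CLTL.uleq (CLTL.conj (CLTL.pos a) (CLTL.neg a)) (CLTL.neg a))).semInf u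
      = ⨆ i : ℕ, sInf {m : ℕ∞ | ∃ k : ℕ, m = (k : ℕ∞) ∧ a ∉ u (i + k)} := by
  classical
  have hex : ∀ i : ℕ, ∃ k : ℕ, a ∉ u (i + k) := by
    intro i
    obtain ⟨j, hij, hj⟩ := hinf i
    exact ⟨j - i, by rwa [Nat.add_sub_cancel' hij]⟩
  set g : ℕ → ℕ := fun i => Nat.find (hex i) with hg
  have hsat : ∀ n : ℕ, (CLTL.rels (CLTL.conj (CLTL.pos a) (CLTL.neg a))
        (CLTL.uleq (CLTL.conj (CLTL.pos a) (CLTL.neg a)) (CLTL.neg a))).sat u n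
      ↔ ∀ i, g i ≤ n := by
    intro n
    have : (CLTL.rels (CLTL.conj (CLTL.pos a) (CLTL.neg a))
        (CLTL.uleq (CLTL.conj (CLTL.pos a) (CLTL.neg a)) (CLTL.neg a))).sat u n
      ↔ ∀ i, ∃ k, a ∉ u (i + k) ∧ k ≤ n := by
      simp [CLTL.sat, shift]
    rw [this]
    constructor
    · intro h i
      obtain ⟨k, hk1, hk2⟩ := h i
      exact le_trans (Nat.find_min' (hex i) hk1) hk2
    · intro h i
      exact ⟨g i, Nat.find_spec (hex i), h i⟩
  have hInf : ∀ i : ℕ, sInf {m : ℕ∞ | ∃ k : ℕ, m = (k : ℕ∞) ∧ a ∉ u (i + k)}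
      = (g i : ℕ∞) := by
    intro i
    apply le_antisymm
    · exact sInf_le ⟨g i, rfl, Nat.find_spec (hex i)⟩
    · apply le_sInf
      rintro m ⟨k, rfl, hk⟩
      exact_mod_cast Nat.find_min' (hex i) hk
  rw [iSup_congr hInf]
  unfold CLTL.semInf
  have hset : {m : ℕ∞ | ∃ n : ℕ, m = n ∧ (CLTL.rels (CLTL.conj (CLTL.pos a) (CLTL.neg a))
        (CLTL.uleq (CLTL.conj (CLTL.pos a) (CLTL.neg a)) (CLTL.neg a))).sat u n}
      = {m : ℕ∞ | ∃ n : ℕ, m = n ∧ ∀ i, g i ≤ n} := by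
    ext m
    simp only [Set.mem_setOf_eq, hsat]
  rw [hset]
  apply le_antisymm
  · by_cases htop : (⨆ i : ℕ, (g i : ℕ∞)) = ⊤
    · rw [htop]; exact le_top
    · obtain ⟨M, hM⟩ := WithTop.ne_top_iff_exists.mp htop
      have hle : ∀ i, g i ≤ M := by
        intro i
        have : (g i : ℕ∞) ≤ (M : ℕ∞) := le_trans (le_iSup (fun i => (g i : ℕ∞)) i) hM.ge
        exact_mod_cast this
      rw [← hM]
      exact sInf_le ⟨M, rfl, hle⟩
  · apply le_sInf
    rintro m ⟨n, rfl, hn⟩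
    exact iSup_le fun i => by exact_mod_cast hn i
end
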